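/- If G is a connected topological group, then every continuous partial action of G on a compact space X is a global action, i.e., X_t = X for all t ∈ G. -/

import Mathlib

/-!
The elements `t` with `X_{t⁻¹} = X` form a submonoid, and it is open in `G` because its
complement is the projection of the closed set `{(t, x) | x ∉ X_{t⁻¹}}` along the compact `X`. Intersecting it with its inverse gives an open subgroup, which is
also closed, hence all of the connected group `G`.
-/

/-- A continuous partial action of a topological group `G` on a topological space `X`. -/
structure TopPartialAction (G : Type*) [Group G] [TopologicalSpace G]
    (X : Type*) [TopologicalSpace X] where
  dom : G → Set X
  act : G → X → X
  dom_open : ∀ t : G, IsOpen (dom t)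
  bijOn : ∀ t : G, Set.BijOn (act t) (dom t⁻¹) (dom t)
  graph_open : IsOpen {p : G × X | p.2 ∈ dom p.1⁻¹}
  act_cont : ContinuousOn (fun p : G × X => act p.1 p.2) {p : G × X | p.2 ∈ dom p.1⁻¹}
  dom_one : dom 1 = Set.univ
  act_one : ∀ x : X, act 1 x = x
  inv_eq : ∀ t : G, ∀ x ∈ dom t⁻¹, act t⁻¹ (act t x) = x
  extend : ∀ s t : G, ∀ x ∈ dom t⁻¹, act t x ∈ dom s⁻¹ →
    x ∈ dom (s * t)⁻¹ ∧ act (s * t) x = act s (act t x)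

open Set

theorem isOpen_setOf_forall_prodMk_mem {Y Z : Type*} [TopologicalSpace Y] [TopologicalSpace Z]
    [CompactSpace Z] {W : Set (Y × Z)} (hW : IsOpen W) : IsOpen {y | ∀ z, (y, z) ∈ W} := by
  have hcompl : {y | ∀ z, (y, z) ∈ W}ᶜ = Prod.fst '' Wᶜ := by
    ext y
    simp
  rw [← isClosed_compl_iff, hcompl]
  exact isClosedMap_fst_of_compactSpace _ hW.isClosed_compl

namespace TopPartialAction

variable {G : Type*} [Group G] [TopologicalSpace G] {X : Type*} [TopologicalSpace X]
  (α : TopPartialAction G X)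

theorem dom_mul_inv_eq_univ {s t : G} (hs : α.dom s⁻¹ = univ) (ht : α.dom t⁻¹ = univ) :
    α.dom (s * t)⁻¹ = univ :=
  eq_univ_of_forall fun x => (α.extend s t x (ht ▸ mem_univ x) (hs ▸ mem_univ _)).1

theorem isOpen_setOf_dom_inv_eq_univ [CompactSpace X] : IsOpen {t : G | α.dom t⁻¹ = univ} := by
  simp only [eq_univ_iff_forall]
  exact isOpen_setOf_forall_prodMk_mem α.graph_open

def globalSubgroup : Subgroup G where
  carrier := {t | α.dom t = univ ∧ α.dom t⁻¹ = univ}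
  one_mem' := by simp [α.dom_one]
  mul_mem' := by
    rintro s t ⟨hs, hs'⟩ ⟨ht, ht'⟩
    refine ⟨?_, α.dom_mul_inv_eq_univ hs' ht'⟩
    simpa using α.dom_mul_inv_eq_univ (s := t⁻¹) (t := s⁻¹) (by simpa using ht) (by simpa using hs)
  inv_mem' := by
    rintro t ⟨ht, ht'⟩
    exact ⟨ht', by simpa using ht⟩

theorem isOpen_globalSubgroup [IsTopologicalGroup G] [CompactSpace X] :
    IsOpen (α.globalSubgroup : Set G) := by
  have hT := α.isOpen_setOf_dom_inv_eq_univ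
  have hcarrier : (α.globalSubgroup : Set G) = Inv.inv ⁻¹' {t | α.dom t⁻¹ = univ} ∩
      {t | α.dom t⁻¹ = univ} := by
    ext t
    simp [globalSubgroup]
  rw [hcarrier]
  exact (hT.preimage continuous_inv).inter hT

theorem globalSubgroup_eq_top [IsTopologicalGroup G] [ConnectedSpace G] [CompactSpace X] :
    α.globalSubgroup = ⊤ := by
  have hopen := α.isOpen_globalSubgroup
  rw [← Subgroup.coe_eq_univ]
  exact IsClopen.eq_univ ⟨α.globalSubgroup.isClosed_of_isOpen hopen, hopen⟩
    ⟨1, α.globalSubgroup.one_mem⟩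

end TopPartialAction

/-- If `G` is a connected topological group, every continuous partial action of `G` on a
compact space is a global action: `dom t = X` for all `t`. -/
theorem connected_partial_action_is_global
    (G : Type*) [Group G] [TopologicalSpace G] [IsTopologicalGroup G] [ConnectedSpace G]
    (X : Type*) [TopologicalSpace X] [CompactSpace X]
    (α : TopPartialAction G X) :
    ∀ t : G, α.dom t = Set.univ := fun t =>
  ((Subgroup.eq_top_iff' _).1 α.globalSubgroup_eq_top t).1
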